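/- For every integer m ≥ 4, real numbers 0 < v_1 < v_2 < ⋯ < v_m, and nonnegative real numbers A_1, …, A_m, the inequality Δ_1 ≤ c_m* · (v_1 A_1 + v_2 A_2 + ⋯ + v_m A_m) holds. -/

import Mathlib

/-- `csum v i = ∑_{j=1}^{i-1} 2^{j-1} v_{i-j}` (empty sum is 0). -/
noncomputable def csum (v : ℕ → ℝ) (i : ℕ) : ℝ :=
  ∑ j ∈ Finset.Icc 1 (i - 1), (2 : ℝ) ^ (j - 1) * v (i - j)

/-- `cval v i = c_i = (v_i + csum v i) / (v_{i+1} + csum v i)`. -/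
noncomputable def cval (v : ℕ → ℝ) (i : ℕ) : ℝ :=
  (v i + csum v i) / (v (i + 1) + csum v i)

/-- `cstar v m = c_m^* = max_{1 ≤ i ≤ m-1} c_i`. -/
noncomputable def cstar (v : ℕ → ℝ) (m : ℕ) : ℝ :=
  if hne : (Finset.Icc 1 (m - 1)).Nonempty then (Finset.Icc 1 (m - 1)).sup' hne (cval v)
  else 0

/-- `Sfun A m h = S_h = ∑_{ℓ=h}^{m} A_ℓ`. -/
noncomputable def Sfun (A : ℕ → ℝ) (m h : ℕ) : ℝ := ∑ ℓ ∈ Finset.Icc h m, A ℓ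

/-- `Urec A m h = U_h`, defined by `U_{m-1} = A_m` and
`U_h = min (A_h) (U_{h+1}) + S_{h+1}` for `h ≤ m-2`. -/
noncomputable def Urec (A : ℕ → ℝ) (m h : ℕ) : ℝ :=
  if hle : m - 1 ≤ h then A m
  else min (A h) (Urec A m (h + 1)) + Sfun A m (h + 1)
termination_by m - 1 - h
decreasing_by omega

/-- `Delta v A m h = Δ_h`,
`Δ_h = [(v_h + ∑_{j=1}^{h-2} 2^{j-1} v_{h-1-j}) - c_m^* (v_{h-1} + ∑_{j=1}^{h-2} 2^{j-1} v_{h-1-j})] U_h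
     + [(v_{h-1} + ∑_{j=1}^{h-2} 2^{j-1} v_{h-1-j}) - c_m^* ∑_{j=1}^{h-2} 2^{j-1} v_{h-1-j}] S_h
     + ∑_{ℓ=h+1}^{m-1} (v_ℓ - v_{ℓ-1}) U_ℓ`, where `∑_{j=1}^{h-2} 2^{j-1} v_{h-1-j} = csum v (h-1)`. -/
noncomputable def Delta (v A : ℕ → ℝ) (m h : ℕ) : ℝ :=
  ((v h + csum v (h - 1)) - cstar v m * (v (h - 1) + csum v (h - 1))) * Urec A m h +
  ((v (h - 1) + csum v (h - 1)) - cstar v m * csum v (h - 1)) * Sfun A m h +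
  ∑ ℓ ∈ Finset.Icc (h + 1) (m - 1), (v ℓ - v (ℓ - 1)) * Urec A m ℓ

/-!
Downward induction on `h` gives `Δ_h ≤ c_m^* ∑_{ℓ ≥ h} v_ℓ A_ℓ` for `1 ≤ h ≤ m - 1`. Writing
`P_i = csum v i`, one has `P_{i+1} = v_i + 2 P_i`, and `c_i ≤ c_m^*` reads
`v_i + P_i ≤ c_m^* (v_{i+1} + P_i)`. Passing from `Δ_{h+1}` to `Δ_h`, the coefficients of `S_{h+1}`
agree, and what is left is `a min(A_h, U_{h+1}) + b A_h ≤ d U_{h+1} + c_m^* v_h A_h` with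
`a + b = d + c_m^* v_h`, `d = (1 - c_m^*)(v_h + P_h) ≥ 0` and `b ≤ c_m^* v_h` (the inequality for
`i = h - 1`); both values of the minimum then work. The base case `h = m - 1` is the inequality for
`i = m - 2` and `i = m - 1`.
-/

open Finset

lemma csum_add_one_eq_sum_range (v : ℕ → ℝ) (i : ℕ) :
    csum v (i + 1) = ∑ k ∈ range i, 2 ^ k * v (i - k) := by
  rw [csum, Nat.add_sub_cancel, ← Ico_add_one_right_eq_Icc, sum_Ico_eq_sum_range,
    Nat.add_sub_cancel]
  refine sum_congr rfl fun k _ => ?_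
  rw [Nat.add_sub_cancel_left, Nat.add_comm 1 k, Nat.add_sub_add_right]

lemma csum_succ {v : ℕ → ℝ} (hv0 : v 0 = 0) (i : ℕ) :
    csum v (i + 1) = v i + 2 * csum v i := by
  rcases i with _ | i
  · simp [csum, hv0]
  · rw [csum_add_one_eq_sum_range, sum_range_succ', csum_add_one_eq_sum_range, mul_sum]
    simp only [pow_succ, Nat.add_sub_add_right, pow_zero, one_mul, Nat.sub_zero]
    rw [add_comm]
    congr 1
    exact sum_congr rfl fun k _ => by ring

lemma csum_nonneg {v : ℕ → ℝ} {i : ℕ} (hv : ∀ k < i, 0 ≤ v k) : 0 ≤ csum v i :=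
  sum_nonneg fun j hj => mul_nonneg (by positivity) (hv _ (by grind))

lemma cval_le_cstar {v : ℕ → ℝ} {m i : ℕ} (hi : i ∈ Icc 1 (m - 1)) : cval v i ≤ cstar v m := by
  rw [cstar, dif_pos ⟨i, hi⟩]
  exact le_sup' _ hi

lemma cstar_le {v : ℕ → ℝ} {m : ℕ} {c : ℝ} (hc0 : 0 ≤ c)
    (hc : ∀ i ∈ Icc 1 (m - 1), cval v i ≤ c) : cstar v m ≤ c := by
  rw [cstar]
  split_ifs
  exacts [sup'_le _ _ hc, hc0]

section StrictMonoOn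

variable {v : ℕ → ℝ} {m : ℕ}

lemma apply_lt_apply_succ (hv : StrictMonoOn v (Set.Iic m)) {i : ℕ} (hi : i < m) :
    v i < v (i + 1) :=
  hv (Set.mem_Iic.2 hi.le) (Set.mem_Iic.2 hi) (Nat.lt_succ_self i)

lemma add_csum_nonneg (hv0 : v 0 = 0) (hv : StrictMonoOn v (Set.Iic m)) {i : ℕ} (hi : i ≤ m) :
    0 ≤ v i + csum v i := by
  have hv_nonneg : ∀ k ≤ m, 0 ≤ v k := fun k hk =>
    hv0 ▸ hv.monotoneOn (Set.mem_Iic.2 (Nat.zero_le m)) (Set.mem_Iic.2 hk) (Nat.zero_le k)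
  exact add_nonneg (hv_nonneg i hi) (csum_nonneg fun k hk => hv_nonneg k (by omega))

lemma cstar_nonneg (hv0 : v 0 = 0) (hv : StrictMonoOn v (Set.Iic m)) (hm : 2 ≤ m) :
    0 ≤ cstar v m := by
  have h0 := add_csum_nonneg hv0 hv (i := 1) (by omega)
  have hlt := apply_lt_apply_succ hv (i := 1) (by omega)
  exact (div_nonneg h0 (by linarith)).trans (cval_le_cstar (by simp; omega))

lemma cstar_le_one (hv0 : v 0 = 0) (hv : StrictMonoOn v (Set.Iic m)) : cstar v m ≤ 1 := by
  refine cstar_le zero_le_one fun i hi => ?_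
  rw [mem_Icc] at hi
  have h0 := add_csum_nonneg hv0 hv (i := i) (by omega)
  have hlt := apply_lt_apply_succ hv (i := i) (by omega)
  exact div_le_one_of_le₀ (by linarith) (by linarith)

lemma add_csum_le_cstar_mul (hv0 : v 0 = 0) (hv : StrictMonoOn v (Set.Iic m)) (hm : 2 ≤ m)
    {i : ℕ} (hi : i < m) : v i + csum v i ≤ cstar v m * (v (i + 1) + csum v i) := by
  have h0 := add_csum_nonneg hv0 hv hi.le
  have hlt := apply_lt_apply_succ hv hi
  rcases i with _ | i
  · have : csum v 0 = 0 := by simp [csum]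
    rw [hv0, this, zero_add]
    exact mul_nonneg (cstar_nonneg hv0 hv hm) (by linarith)
  · rw [← div_le_iff₀ (by linarith)]
    exact cval_le_cstar (by simp; omega)

end StrictMonoOn

lemma Urec_of_le {A : ℕ → ℝ} {m h : ℕ} (hh : m - 1 ≤ h) : Urec A m h = A m := by
  rw [Urec, dif_pos hh]

lemma Urec_of_lt {A : ℕ → ℝ} {m h : ℕ} (hh : h < m - 1) :
    Urec A m h = min (A h) (Urec A m (h + 1)) + Sfun A m (h + 1) := by
  rw [Urec, dif_neg (by omega)]

lemma Sfun_eq_add {A : ℕ → ℝ} {m h : ℕ} (hh : h ≤ m) : Sfun A m h = A h + Sfun A m (h + 1) := by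
  rw [Sfun, Sfun, ← add_sum_Ioc_eq_sum_Icc hh, Icc_add_one_left_eq_Ioc]

lemma mul_min_add_mul_le {a b d e x y : ℝ} (habde : a + b = d + e) (hd : 0 ≤ d) (hbe : b ≤ e) :
    a * min x y + b * x ≤ d * y + e * x := by
  rcases le_total x y with hxy | hyx
  · rw [min_eq_left hxy]
    linear_combination x * habde + mul_le_mul_of_nonneg_left hxy hd
  · rw [min_eq_right hyx]
    linear_combination y * habde + mul_le_mul_of_nonneg_left hyx (sub_nonneg.2 hbe)

section Delta

variable {v : ℕ → ℝ} {m : ℕ}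

lemma Delta_le_Delta_succ (hv0 : v 0 = 0) (hv : StrictMonoOn v (Set.Iic m)) (hm : 2 ≤ m)
    (A : ℕ → ℝ) {h : ℕ} (h1 : 1 ≤ h) (hh : h + 1 < m) :
    Delta v A m h ≤ Delta v A m (h + 1) + cstar v m * (v h * A h) := by
  obtain ⟨p, rfl⟩ : ∃ p, h = p + 1 := ⟨h - 1, by omega⟩
  set c := cstar v m
  have hP := csum_succ hv0 p
  have hkey := add_csum_le_cstar_mul hv0 hv hm (i := p) (by omega)
  have hd : 0 ≤ (1 - c) * (v (p + 1) + csum v (p + 1)) :=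
    mul_nonneg (sub_nonneg.2 (cstar_le_one hv0 hv)) (add_csum_nonneg hv0 hv (by omega))
  have hmin := mul_min_add_mul_le (x := A (p + 1)) (y := Urec A m (p + 1 + 1))
    (a := v (p + 1) + csum v p - c * (v p + csum v p)) (b := v p + csum v p - c * csum v p)
    (e := c * v (p + 1)) (by rw [hP]; ring) hd (by linarith)
  rw [Delta, Delta, Urec_of_lt (h := p + 1) (by omega), Sfun_eq_add (h := p + 1) (by omega),
    ← add_sum_Ioc_eq_sum_Icc (by omega), Icc_add_one_left_eq_Ioc]
  simp only [Nat.add_sub_cancel, hP] at hmin ⊢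
  linear_combination hmin

lemma Delta_pred_le (hv0 : v 0 = 0) (hv : StrictMonoOn v (Set.Iic m)) (hm : 2 ≤ m)
    {A : ℕ → ℝ} (hA : 0 ≤ A (m - 1)) (hA' : 0 ≤ A m) :
    Delta v A m (m - 1) ≤ cstar v m * (v (m - 1) * A (m - 1) + v m * A m) := by
  obtain ⟨k, rfl⟩ : ∃ k, m = k + 1 + 1 := ⟨m - 2, by omega⟩
  have hP := csum_succ hv0 k
  have hkey := add_csum_le_cstar_mul hv0 hv hm (i := k) (by omega)
  have hkey' := add_csum_le_cstar_mul hv0 hv hm (i := k + 1) (by omega)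
  have hS : Sfun A (k + 1 + 1) (k + 1 + 1) = A (k + 1 + 1) := by simp [Sfun]
  simp only [Delta, Nat.add_sub_cancel, Urec_of_le (m := k + 1 + 1) (h := k + 1) (by omega),
    Sfun_eq_add (Nat.le_succ (k + 1)), hS, Icc_eq_empty_of_lt (Nat.lt_succ_self (k + 1)),
    sum_empty, add_zero] at hA ⊢
  rw [hP] at hkey'
  linear_combination A (k + 1) * hkey + A (k + 1 + 1) * hkey'

lemma Delta_le_cstar_mul_sum (hv0 : v 0 = 0) (hv : StrictMonoOn v (Set.Iic m)) (hm : 2 ≤ m)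
    {A : ℕ → ℝ} (hA : 0 ≤ A (m - 1)) (hA' : 0 ≤ A m) {h : ℕ} (h1 : 1 ≤ h) (hh : h ≤ m - 1) :
    Delta v A m h ≤ cstar v m * ∑ ℓ ∈ Icc h m, v ℓ * A ℓ := by
  induction hh using Nat.decreasingInduction with
  | self =>
    rw [← add_sum_Ioc_eq_sum_Icc (by omega), ← Icc_add_one_left_eq_Ioc,
      Nat.sub_add_cancel (by omega), Icc_self, sum_singleton]
    exact Delta_pred_le hv0 hv hm hA hA'
  | of_succ h hh ih =>
    rw [← add_sum_Ioc_eq_sum_Icc (by omega), ← Icc_add_one_left_eq_Ioc, mul_add]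
    linarith [Delta_le_Delta_succ hv0 hv hm A h1 (by omega), ih (by omega)]

end Delta

/-- For every `m ≥ 4`, reals `0 < v 1 < ⋯ < v m` with `v 0 = 0`, and nonnegative reals
`A_1, …, A_m`, `Δ_1 ≤ c_m^* (v_1 A_1 + v_2 A_2 + ⋯ + v_m A_m)`. -/
theorem stmt7 (m : ℕ) (hm : 4 ≤ m) (v : ℕ → ℝ) (hv0 : v 0 = 0)
    (hv1 : 0 < v 1) (hv : ∀ i, 1 ≤ i → i < m → v i < v (i + 1))
    (A : ℕ → ℝ) (hA : ∀ i ∈ Finset.Icc 1 m, 0 ≤ A i) :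
    Delta v A m 1 ≤ cstar v m * ∑ h ∈ Finset.Icc 1 m, v h * A h := by
  have hmono : StrictMonoOn v (Set.Iic m) := strictMonoOn_Iic_of_lt_succ fun i hi => by
    rcases i with _ | i
    · simpa [hv0] using hv1
    · exact hv (i + 1) (by omega) hi
  exact Delta_le_cstar_mul_sum hv0 hmono (by omega) (hA _ (by simp; omega))
    (hA _ (by simp; omega)) le_rfl (by omega)
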